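/- Let X be a topological space with contraction H to pt as above. Define F, G : [0,1]² × X → X³ by four cases: F(s,t,x) = (H(H(x,1−2t),1−2s), H(x,1−2t), x) for s,t ≤ 1/2; (H(x,1−2s), x, H(x,2t−1)) for s ≤ 1/2, t ≥ 1/2; (H(x,1−2t), H(H(x,1−2t),2s−1), x) for s ≥ 1/2, t ≤ 1/2; (x, H(x,2s−1), H(x,2t−1)) for s,t ≥ 1/2; and G(s,t,x) = (H(x,1−2t), x, H(x,1−2s)) for s,t ≤ 1/2; (x, H(x,2t−1), H(H(x,2t−1),1−2s)) for s ≤ 1/2, t ≥ 1/2; (H(x,1−2t), H(x,2s−1), x) for s ≥ 1/2, t ≤ 1/2; (x, H(H(x,2t−1),2s−1), H(x,2t−1)) for s,t ≥ 1/2. Then F and G are continuous and homotopic through continuous maps, each of which always has at least one coordinate equal to x, and sends points with s ∈ {0,1} or t ∈ {0,1} or x = pt to triples having at least one coordinate equal to pt. -/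
import Mathlib


open Classical in
/-- The map `F = (Γ × id) ∘ (id × Γ)` in its explicit four-case form. -/
noncomputable def Fmap {X : Type*} (H : X × ℝ → X) : ℝ × ℝ × X → X × X × X :=
  fun p =>
    if p.2.1 ≤ 1 / 2 then
      if p.1 ≤ 1 / 2 then
        (H (H (p.2.2, 1 - 2 * p.2.1), 1 - 2 * p.1), H (p.2.2, 1 - 2 * p.2.1), p.2.2)
      else
        (H (p.2.2, 1 - 2 * p.2.1), H (H (p.2.2, 1 - 2 * p.2.1), 2 * p.1 - 1), p.2.2)
    else
      if p.1 ≤ 1 / 2 then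
        (H (p.2.2, 1 - 2 * p.1), p.2.2, H (p.2.2, 2 * p.2.1 - 1))
      else
        (p.2.2, H (p.2.2, 2 * p.1 - 1), H (p.2.2, 2 * p.2.1 - 1))

open Classical in
/-- The map `G = (id × Γ) ∘ Γ̃` in its explicit four-case form. -/
noncomputable def Gmap {X : Type*} (H : X × ℝ → X) : ℝ × ℝ × X → X × X × X :=
  fun p =>
    if p.2.1 ≤ 1 / 2 then
      if p.1 ≤ 1 / 2 then
        (H (p.2.2, 1 - 2 * p.2.1), p.2.2, H (p.2.2, 1 - 2 * p.1))
      else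
        (H (p.2.2, 1 - 2 * p.2.1), H (p.2.2, 2 * p.1 - 1), p.2.2)
    else
      if p.1 ≤ 1 / 2 then
        (p.2.2, H (p.2.2, 2 * p.2.1 - 1), H (H (p.2.2, 2 * p.2.1 - 1), 1 - 2 * p.1))
      else
        (p.2.2, H (H (p.2.2, 2 * p.2.1 - 1), 2 * p.1 - 1), H (p.2.2, 2 * p.2.1 - 1))


open Set

/-! ### Auxiliary definitions for the homotopy -/

/-- Clamp a real number to `[0,1]`. -/
noncomputable def cl01 (z : ℝ) : ℝ := max 0 (min 1 z)

lemma cl01_continuous : Continuous cl01 :=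
  continuous_const.max (continuous_const.min continuous_id)

lemma cl01_of_mem {z : ℝ} (h0 : 0 ≤ z) (h1 : z ≤ 1) : cl01 z = z := by
  unfold cl01; rw [min_eq_right h1, max_eq_right h0]

@[simp] lemma cl01_zero : cl01 0 = 0 := cl01_of_mem le_rfl zero_le_one
@[simp] lemma cl01_one : cl01 1 = 1 := cl01_of_mem zero_le_one le_rfl
lemma cl01_nonneg (z : ℝ) : 0 ≤ cl01 z := le_max_left _ _
lemma cl01_le_one (z : ℝ) : cl01 z ≤ 1 := max_le zero_le_one (min_le_left _ _)
@[simp] lemma cl01_min_one (z : ℝ) : cl01 (min 1 z) = cl01 z := by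
  unfold cl01; rw [← min_assoc, min_self]

/-- coefficient for the first coordinate in the middle stage -/
noncomputable def aC (r s : ℝ) : ℝ := min 1 ((1-2*s)*(3*r)) * min 1 (5/2*(2-3*r))
/-- coefficient for the third coordinate in the middle stage -/
noncomputable def bC (r s : ℝ) : ℝ := min 1 ((1-2*s)*(3-3*r)) * min 1 (5/2*(3*r-1))

lemma aC_third (s : ℝ) : aC (1/3) s = min 1 (1-2*s) := by
  unfold aC; norm_num
lemma bC_third (s : ℝ) : bC (1/3) s = 0 := by
  unfold bC; norm_num
lemma aC_twothird (s : ℝ) : aC (2/3) s = 0 := by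
  unfold aC; norm_num
lemma bC_twothird (s : ℝ) : bC (2/3) s = min 1 (1-2*s) := by
  unfold bC; norm_num
lemma aC_half (r : ℝ) : aC r (1/2) = 0 := by
  unfold aC; norm_num
lemma bC_half (r : ℝ) : bC r (1/2) = 0 := by
  unfold bC; norm_num

lemma aC_mem {r s : ℝ} (hr0 : 0 ≤ r) (hr1 : r ≤ 2/3) (hs : s ≤ 1/2) :
    aC r s ∈ Icc (0:ℝ) 1 := by
  unfold aC
  constructor
  · exact mul_nonneg (le_min zero_le_one (by nlinarith)) (le_min zero_le_one (by nlinarith))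
  · have := mul_le_mul (min_le_left 1 ((1-2*s)*(3*r))) (min_le_left 1 (5/2*(2-3*r)))
      (le_min zero_le_one (by nlinarith)) zero_le_one
    linarith

lemma bC_mem {r s : ℝ} (hr0 : 1/3 ≤ r) (hr1 : r ≤ 1) (hs : s ≤ 1/2) :
    bC r s ∈ Icc (0:ℝ) 1 := by
  unfold bC
  constructor
  · exact mul_nonneg (le_min zero_le_one (by nlinarith)) (le_min zero_le_one (by nlinarith))
  · have := mul_le_mul (min_le_left 1 ((1-2*s)*(3-3*r))) (min_le_left 1 (5/2*(3*r-1)))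
      (le_min zero_le_one (by nlinarith)) zero_le_one
    linarith

open Classical in
/-- Stage 1 of the homotopy (parametrized by a squeezing function `c`). -/
noncomputable def St1 {X : Type*} (c : ℝ → ℝ) (H : X × ℝ → X) : ℝ × ℝ × ℝ × X → X × X × X :=
  fun p =>
    if p.2.2.1 ≤ 1/2 then
      if p.2.1 ≤ 1/2 then
        (H (H (p.2.2.2, c (1-2*p.2.2.1)), c (1-2*p.2.1)),
         H (p.2.2.2, c ((1-3*p.1)*(1-2*p.2.2.1))), p.2.2.2)
      else
        (H (p.2.2.2, c (1-2*p.2.2.1)),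
         H (H (p.2.2.2, c ((1-3*p.1)*(1-2*p.2.2.1))), c (2*p.2.1-1)), p.2.2.2)
    else
      if p.2.1 ≤ 1/2 then
        (H (p.2.2.2, c (1-2*p.2.1)), p.2.2.2, H (p.2.2.2, c (2*p.2.2.1-1)))
      else
        (p.2.2.2, H (p.2.2.2, c (2*p.2.1-1)), H (p.2.2.2, c (2*p.2.2.1-1)))

open Classical in
/-- Stage 2 of the homotopy. -/
noncomputable def St2 {X : Type*} (c : ℝ → ℝ) (H : X × ℝ → X) : ℝ × ℝ × ℝ × X → X × X × X :=
  fun p =>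
    if p.2.2.1 ≤ 1/2 then
      if p.2.1 ≤ 1/2 then
        (H (H (p.2.2.2, c (1-2*p.2.2.1)), c (aC p.1 p.2.1)), p.2.2.2,
         H (p.2.2.2, c (bC p.1 p.2.1)))
      else
        (H (p.2.2.2, c (1-2*p.2.2.1)), H (p.2.2.2, c (2*p.2.1-1)), p.2.2.2)
    else
      if p.2.1 ≤ 1/2 then
        (H (p.2.2.2, c (aC p.1 p.2.1)), p.2.2.2,
         H (H (p.2.2.2, c (2*p.2.2.1-1)), c (bC p.1 p.2.1)))
      else
        (p.2.2.2, H (p.2.2.2, c (2*p.2.1-1)), H (p.2.2.2, c (2*p.2.2.1-1)))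

open Classical in
/-- Stage 3 of the homotopy. -/
noncomputable def St3 {X : Type*} (c : ℝ → ℝ) (H : X × ℝ → X) : ℝ × ℝ × ℝ × X → X × X × X :=
  fun p =>
    if p.2.2.1 ≤ 1/2 then
      if p.2.1 ≤ 1/2 then
        (H (p.2.2.2, c (1-2*p.2.2.1)), p.2.2.2, H (p.2.2.2, c (1-2*p.2.1)))
      else
        (H (p.2.2.2, c (1-2*p.2.2.1)), H (p.2.2.2, c (2*p.2.1-1)), p.2.2.2)
    else
      if p.2.1 ≤ 1/2 then
        (p.2.2.2, H (p.2.2.2, c ((3*p.1-2)*(2*p.2.2.1-1))),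
         H (H (p.2.2.2, c (2*p.2.2.1-1)), c (1-2*p.2.1)))
      else
        (p.2.2.2, H (H (p.2.2.2, c ((3*p.1-2)*(2*p.2.2.1-1))), c (2*p.2.1-1)),
         H (p.2.2.2, c (2*p.2.2.1-1)))

open Classical in
/-- The full homotopy between `Fmap` and `Gmap`. -/
noncomputable def Kmap {X : Type*} (c : ℝ → ℝ) (H : X × ℝ → X) : ℝ × ℝ × ℝ × X → X × X × X :=
  fun p => if p.1 ≤ 1/3 then St1 c H p else if p.1 ≤ 2/3 then St2 c H p else St3 c H p

section Cont

variable {X : Type*} [TopologicalSpace X] {H : X × ℝ → X}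

lemma contHc {Y : Type*} [TopologicalSpace Y]
    (hHcont : ContinuousOn H (univ ×ˢ Icc (0:ℝ) 1)) {f : Y → X} {g : Y → ℝ}
    (hf : Continuous f) (hg : Continuous g) :
    Continuous fun y => H (f y, cl01 (g y)) :=
  hHcont.comp_continuous (hf.prodMk (cl01_continuous.comp hg))
    fun y => ⟨mem_univ _, cl01_nonneg _, cl01_le_one _⟩

lemma contSt1c (hHcont : ContinuousOn H (univ ×ˢ Icc (0:ℝ) 1)) (hH0 : ∀ x, H (x, 0) = x) : Continuous (St1 cl01 H) := by
  unfold St1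
  refine Continuous.if_le ?_ ?_ (by fun_prop) continuous_const ?_
  · refine Continuous.if_le ?_ ?_ (by fun_prop) continuous_const ?_
    · exact (contHc hHcont (contHc hHcont (by fun_prop) (by fun_prop)) (by fun_prop)).prodMk
        ((contHc hHcont (by fun_prop) (by fun_prop)).prodMk (by fun_prop))
    · exact (contHc hHcont (by fun_prop) (by fun_prop)).prodMk
        ((contHc hHcont (contHc hHcont (by fun_prop) (by fun_prop)) (by fun_prop)).prodMk
          (by fun_prop))
    · intro p hp
      rw [hp]; norm_num [hH0]
  · refine Continuous.if_le ?_ ?_ (by fun_prop) continuous_const ?_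
    · exact (contHc hHcont (by fun_prop) (by fun_prop)).prodMk
        ((by fun_prop : Continuous fun p : ℝ × ℝ × ℝ × X => p.2.2.2).prodMk
          (contHc hHcont (by fun_prop) (by fun_prop)))
    · exact (by fun_prop : Continuous fun p : ℝ × ℝ × ℝ × X => p.2.2.2).prodMk
        ((contHc hHcont (by fun_prop) (by fun_prop)).prodMk
          (contHc hHcont (by fun_prop) (by fun_prop)))
    · intro p hp
      rw [hp]; norm_num [hH0]
  · intro p hp
    rw [hp]
    split_ifs with h <;> norm_num [hH0]

lemma contSt2c (hHcont : ContinuousOn H (univ ×ˢ Icc (0:ℝ) 1)) (hH0 : ∀ x, H (x, 0) = x) : Continuous (St2 cl01 H) := by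
  unfold St2
  refine Continuous.if_le ?_ ?_ (by fun_prop) continuous_const ?_
  · refine Continuous.if_le ?_ ?_ (by fun_prop) continuous_const ?_
    · refine (contHc hHcont (contHc hHcont (by fun_prop) (by fun_prop)) ?_).prodMk
        ((by fun_prop : Continuous fun p : ℝ × ℝ × ℝ × X => p.2.2.2).prodMk
          (contHc hHcont (by fun_prop) ?_))
      · exact (by unfold aC; fun_prop : Continuous fun p : ℝ × ℝ × ℝ × X => aC p.1 p.2.1)
      · exact (by unfold bC; fun_prop : Continuous fun p : ℝ × ℝ × ℝ × X => bC p.1 p.2.1)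
    · exact (contHc hHcont (by fun_prop) (by fun_prop)).prodMk
        ((contHc hHcont (by fun_prop) (by fun_prop)).prodMk (by fun_prop))
    · intro p hp
      rw [hp]; norm_num [hH0, aC_half, bC_half]
  · refine Continuous.if_le ?_ ?_ (by fun_prop) continuous_const ?_
    · refine (contHc hHcont (by fun_prop) ?_).prodMk
        ((by fun_prop : Continuous fun p : ℝ × ℝ × ℝ × X => p.2.2.2).prodMk
          (contHc hHcont (contHc hHcont (by fun_prop) (by fun_prop)) ?_))
      · exact (by unfold aC; fun_prop : Continuous fun p : ℝ × ℝ × ℝ × X => aC p.1 p.2.1)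
      · exact (by unfold bC; fun_prop : Continuous fun p : ℝ × ℝ × ℝ × X => bC p.1 p.2.1)
    · exact (by fun_prop : Continuous fun p : ℝ × ℝ × ℝ × X => p.2.2.2).prodMk
        ((contHc hHcont (by fun_prop) (by fun_prop)).prodMk
          (contHc hHcont (by fun_prop) (by fun_prop)))
    · intro p hp
      rw [hp]; norm_num [hH0, aC_half, bC_half]
  · intro p hp
    rw [hp]
    split_ifs with h <;> norm_num [hH0]

lemma contSt3c (hHcont : ContinuousOn H (univ ×ˢ Icc (0:ℝ) 1)) (hH0 : ∀ x, H (x, 0) = x) : Continuous (St3 cl01 H) := by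
  unfold St3
  refine Continuous.if_le ?_ ?_ (by fun_prop) continuous_const ?_
  · refine Continuous.if_le ?_ ?_ (by fun_prop) continuous_const ?_
    · exact (contHc hHcont (by fun_prop) (by fun_prop)).prodMk
        ((by fun_prop : Continuous fun p : ℝ × ℝ × ℝ × X => p.2.2.2).prodMk
          (contHc hHcont (by fun_prop) (by fun_prop)))
    · exact (contHc hHcont (by fun_prop) (by fun_prop)).prodMk
        ((contHc hHcont (by fun_prop) (by fun_prop)).prodMk (by fun_prop))
    · intro p hp
      rw [hp]; norm_num [hH0]
  · refine Continuous.if_le ?_ ?_ (by fun_prop) continuous_const ?_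
    · exact (by fun_prop : Continuous fun p : ℝ × ℝ × ℝ × X => p.2.2.2).prodMk
        ((contHc hHcont (by fun_prop) (by fun_prop)).prodMk
          (contHc hHcont (contHc hHcont (by fun_prop) (by fun_prop)) (by fun_prop)))
    · exact (by fun_prop : Continuous fun p : ℝ × ℝ × ℝ × X => p.2.2.2).prodMk
        ((contHc hHcont (contHc hHcont (by fun_prop) (by fun_prop)) (by fun_prop)).prodMk
          (contHc hHcont (by fun_prop) (by fun_prop)))
    · intro p hp
      rw [hp]; norm_num [hH0]
  · intro p hp
    rw [hp]
    split_ifs with h <;> norm_num [hH0]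

lemma contKc (hHcont : ContinuousOn H (univ ×ˢ Icc (0:ℝ) 1)) (hH0 : ∀ x, H (x, 0) = x) : Continuous (Kmap cl01 H) := by
  unfold Kmap
  refine Continuous.if_le (contSt1c hHcont hH0)
    (Continuous.if_le (contSt2c hHcont hH0) (contSt3c hHcont hH0)
      (by fun_prop) continuous_const ?_)
    (by fun_prop) continuous_const ?_
  · intro p hp
    unfold St2 St3
    rw [hp]
    split_ifs with h1 h2 h2 <;>
      norm_num [hH0, aC_twothird, bC_twothird]
  · intro p hp
    unfold St1 St2 St3
    rw [hp]
    norm_num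
    split_ifs with h1 h2 h2 <;>
      norm_num [hH0, aC_third, bC_third]

end Cont

lemma Kmap_zero {X : Type*} (H : X × ℝ → X) (s t : ℝ) (x : X) :
    Kmap id H (0, s, t, x) = Fmap H (s, t, x) := by
  unfold Kmap St1 Fmap
  norm_num

lemma Kmap_one {X : Type*} (H : X × ℝ → X) (s t : ℝ) (x : X) :
    Kmap id H (1, s, t, x) = Gmap H (s, t, x) := by
  unfold Kmap St3 Gmap
  norm_num

lemma cl01_aC {r s : ℝ} (h0 : 0 ≤ r) (h1 : r ≤ 2/3) (h2 : s ≤ 1/2) :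
    cl01 (aC r s) = aC r s :=
  cl01_of_mem (aC_mem h0 h1 h2).1 (aC_mem h0 h1 h2).2

lemma cl01_bC {r s : ℝ} (h0 : 1/3 ≤ r) (h1 : r ≤ 1) (h2 : s ≤ 1/2) :
    cl01 (bC r s) = bC r s :=
  cl01_of_mem (bC_mem h0 h1 h2).1 (bC_mem h0 h1 h2).2

set_option maxHeartbeats 1000000 in
lemma Kmap_eqOn {X : Type*} (H : X × ℝ → X) :
    ∀ p ∈ (Icc (0:ℝ) 1 ×ˢ Icc (0:ℝ) 1 ×ˢ Icc (0:ℝ) 1 ×ˢ (univ : Set X)),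
      Kmap id H p = Kmap cl01 H p := by
  rintro ⟨r, s, t, x⟩ ⟨⟨hr0, hr1⟩, ⟨hs0, hs1⟩, ⟨ht0, ht1⟩, -⟩
  unfold Kmap St1 St2 St3
  split_ifs <;> simp only [id_eq] <;>
    (try rw [cl01_aC (by linarith) (by linarith) (by linarith)]) <;>
    (try rw [cl01_bC (by linarith) (by linarith) (by linarith)]) <;>
    (repeat rw [cl01_of_mem]) <;> nlinarith

lemma aC_one {r : ℝ} (h0 : 1/3 ≤ r) (h1 : r ≤ 1/2) : aC r 0 = 1 := by
  unfold aC
  rw [show ((1:ℝ)-2*0)*(3*r) = 3*r by ring, min_eq_left (by linarith),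
    min_eq_left (by linarith)]
  norm_num

lemma bC_one {r : ℝ} (h0 : 1/2 ≤ r) (h1 : r ≤ 2/3) : bC r 0 = 1 := by
  unfold bC
  rw [show ((1:ℝ)-2*0)*(3-3*r) = 3-3*r by ring, min_eq_left (by linarith),
    min_eq_left (by linarith)]
  norm_num

set_option maxHeartbeats 1000000 in
lemma Kmap_cond {X : Type*} [TopologicalSpace X] (pt : X) (H : X × ℝ → X)
    (hH1 : ∀ x, H (x, 1) = pt) (hHpt : ∀ t ∈ Set.Icc (0:ℝ) 1, H (pt, t) = pt) :
    ∀ r ∈ Set.Icc (0:ℝ) 1, ∀ s ∈ Set.Icc (0:ℝ) 1, ∀ t ∈ Set.Icc (0:ℝ) 1, ∀ x : X,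
      ((Kmap id H (r, s, t, x)).1 = x ∨ (Kmap id H (r, s, t, x)).2.1 = x ∨
        (Kmap id H (r, s, t, x)).2.2 = x) ∧
      (s = 0 ∨ s = 1 ∨ t = 0 ∨ t = 1 ∨ x = pt →
        (Kmap id H (r, s, t, x)).1 = pt ∨ (Kmap id H (r, s, t, x)).2.1 = pt ∨
          (Kmap id H (r, s, t, x)).2.2 = pt) := by
  intro r hr s hs t ht x
  obtain ⟨hr0, hr1⟩ := hr
  obtain ⟨hs0, hs1⟩ := hs
  obtain ⟨ht0, ht1⟩ := ht
  unfold Kmap St1 St2 St3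
  split_ifs <;> simp only [id_eq] <;> refine ⟨by simp, ?_⟩ <;>
    rintro (rfl | rfl | rfl | rfl | hx) <;>
    first
      | exact Or.inl hx
      | exact Or.inr (Or.inl hx)
      | exact Or.inr (Or.inr hx)
      | (exfalso; linarith)
      | (left; norm_num [hH1]; done)
      | (right; left; norm_num [hH1]; done)
      | (right; right; norm_num [hH1]; done)
      | (left; norm_num [hH1];
         exact hHpt _ ⟨(aC_mem (r := r) (s := s) (by linarith) (by linarith) (by linarith)).1,
           (aC_mem (r := r) (s := s) (by linarith) (by linarith) (by linarith)).2⟩)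
      | (right; right; norm_num [hH1];
         exact hHpt _ ⟨(bC_mem (r := r) (s := s) (by linarith) (by linarith) (by linarith)).1,
           (bC_mem (r := r) (s := s) (by linarith) (by linarith) (by linarith)).2⟩)
      | (left; norm_num [hH1]; exact hHpt _ ⟨by linarith, by linarith⟩)
      | (right; left; norm_num [hH1]; exact hHpt _ ⟨by linarith, by linarith⟩)
      | (right; right; norm_num [hH1]; exact hHpt _ ⟨by linarith, by linarith⟩)
      | (rcases le_total r (1/2) with hc | hc
         · left
           rw [aC_one (by linarith) hc]
           exact hH1 _
         · right; right
           rw [bC_one hc (by linarith)]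
           exact hH1 _)

/-- For a contraction `H` of `X` to `pt`, the two explicit maps `F` and `G` (the two
associativity compositions of the secondary product construction) are continuous on
`[0,1]² × X` and homotopic through continuous maps, each of which always has at least
one coordinate equal to `x` and sends points with `s ∈ {0,1}`, `t ∈ {0,1}` or
`x = pt` to triples having at least one coordinate equal to `pt`. -/
theorem stmt15 {X : Type*} [TopologicalSpace X] (pt : X) (H : X × ℝ → X)
    (hHcont : ContinuousOn H (Set.univ ×ˢ Set.Icc (0:ℝ) 1))
    (hH0 : ∀ x, H (x, 0) = x) (hH1 : ∀ x, H (x, 1) = pt)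
    (hHpt : ∀ t ∈ Set.Icc (0:ℝ) 1, H (pt, t) = pt) :
    ContinuousOn (Fmap H) (Set.Icc (0:ℝ) 1 ×ˢ Set.Icc (0:ℝ) 1 ×ˢ Set.univ) ∧
    ContinuousOn (Gmap H) (Set.Icc (0:ℝ) 1 ×ˢ Set.Icc (0:ℝ) 1 ×ˢ Set.univ) ∧
    ∃ K : ℝ × ℝ × ℝ × X → X × X × X,
      ContinuousOn K
        (Set.Icc (0:ℝ) 1 ×ˢ Set.Icc (0:ℝ) 1 ×ˢ Set.Icc (0:ℝ) 1 ×ˢ Set.univ) ∧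
      (∀ s t x, K (0, s, t, x) = Fmap H (s, t, x)) ∧
      (∀ s t x, K (1, s, t, x) = Gmap H (s, t, x)) ∧
      (∀ r ∈ Set.Icc (0:ℝ) 1, ∀ s ∈ Set.Icc (0:ℝ) 1, ∀ t ∈ Set.Icc (0:ℝ) 1, ∀ x : X,
        ((K (r, s, t, x)).1 = x ∨ (K (r, s, t, x)).2.1 = x ∨
          (K (r, s, t, x)).2.2 = x) ∧
        (s = 0 ∨ s = 1 ∨ t = 0 ∨ t = 1 ∨ x = pt →
          (K (r, s, t, x)).1 = pt ∨ (K (r, s, t, x)).2.1 = pt ∨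
            (K (r, s, t, x)).2.2 = pt)) := by
  have contK : ContinuousOn (Kmap id H)
      (Set.Icc (0:ℝ) 1 ×ˢ Set.Icc (0:ℝ) 1 ×ˢ Set.Icc (0:ℝ) 1 ×ˢ (Set.univ : Set X)) :=
    ((contKc hHcont hH0).continuousOn).congr (Kmap_eqOn H)
  refine ⟨?_, ?_, Kmap id H, contK, fun s t x => Kmap_zero H s t x,
    fun s t x => Kmap_one H s t x, Kmap_cond pt H hH1 hHpt⟩
  · have h : ContinuousOn (fun q : ℝ × ℝ × X => Kmap id H (0, q.1, q.2.1, q.2.2))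
        (Set.Icc (0:ℝ) 1 ×ˢ Set.Icc (0:ℝ) 1 ×ˢ (Set.univ : Set X)) :=
      contK.comp (Continuous.continuousOn (by fun_prop))
        (fun q hq => ⟨⟨le_rfl, zero_le_one⟩, hq⟩)
    exact h.congr fun q hq => (Kmap_zero H q.1 q.2.1 q.2.2).symm
  · have h : ContinuousOn (fun q : ℝ × ℝ × X => Kmap id H (1, q.1, q.2.1, q.2.2))
        (Set.Icc (0:ℝ) 1 ×ˢ Set.Icc (0:ℝ) 1 ×ˢ (Set.univ : Set X)) :=
      contK.comp (Continuous.continuousOn (by fun_prop))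
        (fun q hq => ⟨⟨zero_le_one, le_rfl⟩, hq⟩)
    exact h.congr fun q hq => (Kmap_one H q.1 q.2.1 q.2.2).symm
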